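/- arXiv:math/0605537 — 4 statements merged into one kernel-verified Lean document; each statement's English description precedes it below -/
import Mathlib

section
/- Let P and Σ be finite partially ordered sets and let f : P → Σ be a map such that, for every x ∈ P, f restricts to an order isomorphism from P_x = {y ∈ P : y ≤ x} onto Σ_{f(x)} = {η ∈ Σ : η ≤ f(x)}. Give P the poset (Alexandrov) topology. Then for every τ ∈ Σ, the connected components of the subspace f⁻¹(Σ^τ) = {y ∈ P : f(y) ≥ τ} of P are exactly the sets P^x = {y ∈ P : y ≥ x}, for x ∈ P with f(x) = τ. -/
/-- The poset (Alexandrov) topology on a preorder: the open sets are exactly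
the upper sets. -/
def posetTopology (P : Type*) [Preorder P] : TopologicalSpace P where
  IsOpen U := IsUpperSet U
  isOpen_univ := isUpperSet_univ
  isOpen_inter _ _ hs ht := hs.inter ht
  isOpen_sUnion _ h := isUpperSet_sUnion h

/-- If `f : P → Σ` is a map of finite posets restricting to an order isomorphism
from `P_x = {y ≤ x}` onto `Σ_{f(x)} = {η ≤ f x}` for every `x`, then for every
`τ ∈ Σ` the connected components of the subspace `f⁻¹(Σ^τ) = {y | τ ≤ f y}` of
`P` (with the poset topology) are exactly the sets `P^x = {y | x ≤ y}` for
`x ∈ f⁻¹(τ)`. -/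
theorem components_of_preimage_of_upSet {P Q : Type*} [Fintype P] [PartialOrder P]
    [Fintype Q] [PartialOrder Q] (f : P → Q)
    (hrefl : ∀ x y z : P, y ≤ x → z ≤ x → (f y ≤ f z ↔ y ≤ z))
    (hsurj : ∀ x : P, ∀ η : Q, η ≤ f x → ∃ y : P, y ≤ x ∧ f y = η)
    (τ : Q) :
    letI : TopologicalSpace P := posetTopology P
    ∀ C : Set {y : P // τ ≤ f y},
      (∃ y : {y : P // τ ≤ f y}, C = connectedComponent y) ↔
      (∃ x : P, f x = τ ∧ C = {y : {y : P // τ ≤ f y} | x ≤ y.val}) := by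
  letI : TopologicalSpace P := posetTopology P
  intro C
  -- uniqueness of the point below y mapping to a given value
  have huniq : ∀ y a b : P, a ≤ y → b ≤ y → f a = f b → a = b := by
    intro y a b ha hb hfe
    exact le_antisymm ((hrefl y a b ha hb).1 hfe.le) ((hrefl y b a hb ha).1 hfe.ge)
  set S := {y : P // τ ≤ f y} with hS
  -- open sets in the subspace are exactly the upper sets
  have hopen : ∀ A : Set S, IsOpen A ↔ IsUpperSet A := by
    intro A
    constructor
    · rw [isOpen_induced_iff]
      rintro ⟨U, hU, rfl⟩
      intro a b hab ha
      exact (hU : IsUpperSet U) (hab : a.val ≤ b.val) ha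
    · intro hA
      rw [isOpen_induced_iff]
      refine ⟨{p : P | ∃ a : S, a ∈ A ∧ (a : P) ≤ p}, ?_, ?_⟩
      · intro p q hpq hp
        obtain ⟨a, ha, hap⟩ := hp
        exact ⟨a, ha, hap.trans hpq⟩
      · ext z
        constructor
        · rintro ⟨a, ha, haz⟩
          exact hA (haz : a ≤ z) ha
        · intro hz
          exact ⟨z, hz, le_rfl⟩
  -- key lemma: the connected component of y is the up-set of the unique x ≤ y with f x = τ
  have key : ∀ (y : S) (x : P), x ≤ y.val → f x = τ →
      connectedComponent y = {z : S | x ≤ z.val} := by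
    intro y x hxy hfx
    have hxS : τ ≤ f x := hfx.ge
    set U : Set S := {z : S | x ≤ z.val} with hU
    have hUopen : IsOpen U := (hopen U).2 (fun a b hab ha => ha.trans hab)
    have hUclosed : IsClosed U := by
      rw [← isOpen_compl_iff]
      refine (hopen Uᶜ).2 ?_
      intro a b hab ha hbU
      apply ha
      obtain ⟨w, hwa, hfw⟩ := hsurj a.val τ a.property
      have : w = x := huniq b.val w x (le_trans hwa hab) hbU (hfw.trans hfx.symm)
      show x ≤ a.val
      exact this ▸ hwa
    have hyU : y ∈ U := hxy
    let xS : S := ⟨x, hxS⟩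
    -- every element of U lies in the connected component of xS
    have hUsub : U ⊆ connectedComponent xS := by
      intro z hz
      have hcl : xS ∈ closure ({z} : Set S) := by
        rw [mem_closure_iff]
        intro o ho hxo
        exact ⟨z, (hopen o).1 ho (hz : x ≤ z.val) hxo, rfl⟩
      have h1 : closure ({z} : Set S) ⊆ connectedComponent z :=
        closure_minimal (Set.singleton_subset_iff.2 mem_connectedComponent)
          isClosed_connectedComponent
      have h2 : xS ∈ connectedComponent z := h1 hcl
      rw [← connectedComponent_eq h2]
      exact mem_connectedComponent
    have h3 : connectedComponent y ⊆ U :=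
      (IsClopen.connectedComponent_subset ⟨hUclosed, hUopen⟩ hyU)
    have h4 : connectedComponent xS = connectedComponent y :=
      connectedComponent_eq (hUsub hyU)
    exact le_antisymm h3 (h4 ▸ hUsub : U ⊆ connectedComponent y)
  constructor
  · rintro ⟨y, rfl⟩
    obtain ⟨x, hxy, hfx⟩ := hsurj y.val τ y.property
    exact ⟨x, hfx, key y x hxy hfx⟩
  · rintro ⟨x, hfx, rfl⟩
    refine ⟨⟨x, hfx.ge⟩, (key ⟨x, hfx.ge⟩ x le_rfl hfx).symm⟩
end

section
/- Let f : (P, w) → Σ and f' : (P', w') → Σ be branched covers of finite rooted posets, of degrees d and d' respectively. Let Q = {(x, x') ∈ P × P' : f(x) = f'(x')} with the componentwise partial order, with weight function w''(x, x') = w(x) · w'(x'), and with the map h : Q → Σ given by h(x, x') = f(x). Then Q is a finite rooted poset whose root is (root of P, root of P'), and h : (Q, w'') → Σ is a branched cover of degree d · d'. (This is the poset form of the paper's assertion that the fibered product of two branched covers of a cone complex, with the product weight function, is a branched cover of the product degree.) -/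
open scoped Classical

/-- `r` is the unique minimal element (the root) of the poset `P`. -/
def IsRoot {P : Type*} [PartialOrder P] (r : P) : Prop :=
  (∀ x : P, x ≤ r → x = r) ∧ ∀ x : P, (∀ y : P, y ≤ x → y = x) → x = r

/-- A branched cover of finite posets: the weights are positive, `f` restricts to an
order isomorphism from `P_x = {y ≤ x}` onto `Q_{f x} = {η ≤ f x}` for every `x`, and
for every `x` the weighted trace over `P^x = {y ≥ x}` is constant on `Q^{f x}`. -/
def IsBranchedCover {P Q : Type*} [PartialOrder P] [PartialOrder Q] [Fintype P] [Fintype Q]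
    (f : P → Q) (w : P → ℤ) : Prop :=
  (∀ x : P, 1 ≤ w x) ∧
  (∀ x y z : P, y ≤ x → z ≤ x → (f y ≤ f z ↔ y ≤ z)) ∧
  (∀ x : P, ∀ η : Q, η ≤ f x → ∃ y : P, y ≤ x ∧ f y = η) ∧
  (∀ x : P, ∀ η η' : Q, f x ≤ η → f x ≤ η' →
    ∑ y ∈ Finset.univ.filter (fun y => x ≤ y ∧ f y = η), w y =
    ∑ y ∈ Finset.univ.filter (fun y => x ≤ y ∧ f y = η'), w y)

/-
The pair of roots is a least element of the fibered product, and the local-isomorphism and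
lifting conditions hold coordinatewise. For the balancing condition: the points of the fibered
product above `(x, x')` lying over `η` are exactly the pairs of a point of `P` above `x` over `η`
and a point of `P'` above `x'` over `η`, so their total product weight is the product of the two
weighted counts, each of which is independent of `η`.
-/

open Finset

section RootedPoset

variable {P : Type*} [PartialOrder P]

theorem IsRoot.le [Finite P] {r : P} (hr : IsRoot r) (x : P) : r ≤ x := by
  obtain ⟨b, hbx, hb⟩ := exists_minimal_le_of_wellFoundedLT (fun _ : P => True) x trivial
  rwa [← hr.2 b fun y hy => le_antisymm hy (hb.2 trivial hy)]

theorem isRoot_of_forall_le {r : P} (hr : ∀ x, r ≤ x) : IsRoot r :=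
  ⟨fun x hx => le_antisymm hx (hr x), fun x hx => hx r (hr x) |>.symm⟩

end RootedPoset

noncomputable def fiberWeight {P S : Type*} [PartialOrder P] [Fintype P] (f : P → S)
    (w : P → ℤ) (x : P) (η : S) : ℤ :=
  ∑ y ∈ univ.filter (fun y => x ≤ y ∧ f y = η), w y

namespace IsBranchedCover

variable {P S : Type*} [PartialOrder P] [PartialOrder S] [Fintype P] [Fintype S]
  {f : P → S} {w : P → ℤ}

theorem map_le_map_iff (hf : IsBranchedCover f w) {x y z : P} (hy : y ≤ x) (hz : z ≤ x) :
    f y ≤ f z ↔ y ≤ z :=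
  hf.2.1 x y z hy hz

theorem exists_le_map_eq (hf : IsBranchedCover f w) {x : P} {η : S} (hη : η ≤ f x) :
    ∃ y ≤ x, f y = η :=
  hf.2.2.1 x η hη

theorem fiberWeight_eq (hf : IsBranchedCover f w) {x : P} {η η' : S} (hη : f x ≤ η)
    (hη' : f x ≤ η') : fiberWeight f w x η = fiberWeight f w x η' :=
  hf.2.2.2 x η η' hη hη'

theorem map_root (hf : IsBranchedCover f w) {r : P} (hr : IsRoot r) {rS : S}
    (hrS : IsRoot rS) : f r = rS :=
  hrS.2 _ fun η hη => by
    obtain ⟨y, hy, rfl⟩ := hf.exists_le_map_eq hη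
    rw [hr.1 y hy]

end IsBranchedCover

section FiberProduct

variable {P P' S : Type*} [PartialOrder P] [PartialOrder P']

abbrev FiberProduct (f : P → S) (f' : P' → S) := {q : P × P' // f q.1 = f' q.2}

variable [Fintype P] [Fintype P'] {f : P → S} {w : P → ℤ} {f' : P' → S} {w' : P' → ℤ}

theorem fiberWeight_fiberProduct (x : FiberProduct f f') (η : S) :
    fiberWeight (fun q : FiberProduct f f' => f q.1.1) (fun q => w q.1.1 * w' q.1.2) x η =
      fiberWeight f w x.1.1 η * fiberWeight f' w' x.1.2 η := by
  rw [fiberWeight, fiberWeight, fiberWeight, sum_mul_sum, ← sum_product']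
  refine sum_nbij' (fun q => q.1) (fun p => if h : f p.1 = f' p.2 then ⟨p, h⟩ else x)
    ?_ ?_ ?_ ?_ fun _ _ => rfl
  · rintro ⟨⟨y, y'⟩, hq⟩
    simp only [mem_filter, mem_univ, true_and, mem_product, ← Subtype.coe_le_coe, Prod.le_def]
    rintro ⟨⟨hy, hy'⟩, rfl⟩
    exact ⟨⟨hy, rfl⟩, hy', hq.symm⟩
  · rintro ⟨y, y'⟩
    simp only [mem_filter, mem_univ, true_and, mem_product]
    rintro ⟨⟨hy, rfl⟩, hy', hq⟩
    simp [hq, ← Subtype.coe_le_coe, Prod.le_def, hy, hy']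
  · intro q _
    simp [q.2]
  · rintro ⟨y, y'⟩ hp
    simp only [mem_filter, mem_univ, true_and, mem_product] at hp
    simp [hp.1.2, hp.2.2]

variable [PartialOrder S] [Fintype S]

theorem IsBranchedCover.fiberProduct (hf : IsBranchedCover f w)
    (hf' : IsBranchedCover f' w') :
    IsBranchedCover (fun q : FiberProduct f f' => f q.1.1) (fun q => w q.1.1 * w' q.1.2) := by
  refine ⟨fun q => one_le_mul_of_one_le_of_one_le (hf.1 _) (hf'.1 _), ?_, ?_, ?_⟩
  · rintro x y z ⟨hy, hy'⟩ ⟨hz, hz'⟩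
    refine ⟨fun hyz => ⟨(hf.map_le_map_iff hy hz).1 hyz, ?_⟩,
      fun hyz => (hf.map_le_map_iff hy hz).2 hyz.1⟩
    rw [← hf'.map_le_map_iff hy' hz', ← y.2, ← z.2]
    exact hyz
  · intro x η (hη : η ≤ f x.1.1)
    obtain ⟨y, hy, rfl⟩ := hf.exists_le_map_eq hη
    obtain ⟨y', hy', hyy'⟩ := hf'.exists_le_map_eq (x.2 ▸ hη)
    exact ⟨⟨(y, y'), hyy'.symm⟩, ⟨hy, hy'⟩, rfl⟩
  · intro x η η' (hη : f x.1.1 ≤ η) (hη' : f x.1.1 ≤ η')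
    calc fiberWeight _ _ x η = fiberWeight f w x.1.1 η * fiberWeight f' w' x.1.2 η :=
          fiberWeight_fiberProduct x η
      _ = fiberWeight f w x.1.1 η' * fiberWeight f' w' x.1.2 η' := by
          rw [hf.fiberWeight_eq hη hη', hf'.fiberWeight_eq (x.2 ▸ hη) (x.2 ▸ hη')]
      _ = fiberWeight _ _ x η' := (fiberWeight_fiberProduct x η').symm

end FiberProduct

/-- The fibered product of two branched covers of finite rooted posets, equipped with
the product weight function, is a branched cover whose root is the pair of roots and
whose degree is the product of the degrees. -/
theorem branchedCover_fiberProduct {P P' S : Type*} [PartialOrder P] [PartialOrder P']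
    [PartialOrder S] [Fintype P] [Fintype P'] [Fintype S]
    (f : P → S) (w : P → ℤ) (f' : P' → S) (w' : P' → ℤ)
    (hf : IsBranchedCover f w) (hf' : IsBranchedCover f' w')
    (rP : P) (hrP : IsRoot rP) (rP' : P') (hrP' : IsRoot rP')
    (rS : S) (hrS : IsRoot rS) :
    ∃ hr : f rP = f' rP',
      IsRoot (⟨(rP, rP'), hr⟩ : {q : P × P' // f q.1 = f' q.2}) ∧
      IsBranchedCover (fun q : {q : P × P' // f q.1 = f' q.2} => f q.val.1)
        (fun q : {q : P × P' // f q.1 = f' q.2} => w q.val.1 * w' q.val.2) ∧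
      (fun q : {q : P × P' // f q.1 = f' q.2} => w q.val.1 * w' q.val.2)
          ⟨(rP, rP'), hr⟩ = w rP * w' rP' := by
  have hr : f rP = f' rP' := (hf.map_root hrP hrS).trans (hf'.map_root hrP' hrS).symm
  exact ⟨hr, isRoot_of_forall_le fun q => ⟨hrP.le q.1.1, hrP'.le q.1.2⟩,
    hf.fiberProduct hf', rfl⟩
end

section
/- (Continuity of the flag map interpolating Klyachko's filtrations.) In the flag setup, the map v ↦ Fl(v) from ℝ^n (with its standard topology) to the collection of sets of subspaces of E — that is, to Set (Submodule k E) partially ordered by set inclusion and equipped with the poset (Alexandrov) topology whose open sets are the upper sets — is continuous. -/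
/-- Continuity of the flag map interpolating Klyachko's filtrations: with
`F_v(t) = ⨆ {W i : u i v ≥ t}`, the map sending `v ∈ ℝⁿ` to the flag
`Fl(v) = {F_v(t) : t ∈ ℝ}`, viewed as an element of `Set (Submodule k E)`
ordered by inclusion and given the poset (Alexandrov) topology, is continuous. -/
theorem flagMap_continuous {k : Type*} [Field k] {E : Type*} [AddCommGroup E] [Module k E]
    [FiniteDimensional k E] {I : Type*} [Fintype I] {n : ℕ}
    (u : I → ((Fin n → ℝ) →ₗ[ℝ] ℝ)) (W : I → Submodule k E) :
    letI : TopologicalSpace (Set (Submodule k E)) := posetTopology (Set (Submodule k E))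
    Continuous (fun v : Fin n → ℝ =>
      {F : Submodule k E | ∃ t : ℝ, F = ⨆ i ∈ {i : I | t ≤ u i v}, W i}) := by
  letI : TopologicalSpace (Set (Submodule k E)) := posetTopology (Set (Submodule k E))
  set f := fun v : Fin n → ℝ =>
      {F : Submodule k E | ∃ t : ℝ, F = ⨆ i ∈ {i : I | t ≤ u i v}, W i} with hf
  rw [continuous_def]
  intro U hU
  have hUup : IsUpperSet U := hU
  rw [isOpen_iff_mem_nhds]
  intro v hv
  have hcont : ∀ i : I, Continuous (u i) := fun i => (u i).continuous_of_finiteDimensional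
  set N : Set (Fin n → ℝ) :=
    ⋂ i, ⋂ j, ⋂ (_ : u j v < u i v), {w | u j w < u i w} with hN
  have hNopen : IsOpen N := isOpen_iInter_of_finite fun i =>
    isOpen_iInter_of_finite fun j => isOpen_iInter_of_finite fun _ =>
      isOpen_lt (hcont j) (hcont i)
  have hvN : v ∈ N := by
    simp only [hN, Set.mem_iInter, Set.mem_setOf_eq]
    exact fun i j h => h
  have hsub : ∀ w ∈ N, f v ⊆ f w := by
    intro w hw F hF
    have hw' : ∀ i j : I, u j v < u i v → u j w < u i w := by
      intro i j h
      have := Set.mem_iInter.mp (Set.mem_iInter.mp (Set.mem_iInter.mp hw i) j) h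
      exact this
    obtain ⟨t, rfl⟩ := hF
    by_cases hS : ∃ i : I, t ≤ u i v
    · obtain ⟨i0, hi0⟩ := hS
      set S : Finset I := Finset.univ.filter (fun i => t ≤ u i v) with hSdef
      have hSne : S.Nonempty := ⟨i0, by simp [hSdef, hi0]⟩
      set s : ℝ := S.inf' hSne (fun i => u i w) with hsdef
      refine ⟨s, ?_⟩
      have hset : {i : I | t ≤ u i v} = {i : I | s ≤ u i w} := by
        ext i
        simp only [Set.mem_setOf_eq]
        constructor
        · intro hi
          exact Finset.inf'_le _ (by simp [hSdef, hi])
        · intro hi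
          by_contra hti
          push_neg at hti
          obtain ⟨j0, hj0S, hj0⟩ := Finset.exists_mem_eq_inf' hSne (fun i => u i w)
          have hj0v : t ≤ u j0 v := by simpa [hSdef] using hj0S
          have : u i w < u j0 w := hw' j0 i (lt_of_lt_of_le hti hj0v)
          rw [← hj0] at this
          exact absurd hi (not_le.mpr this)
      rw [hset]
    · push_neg at hS
      set s : ℝ := 1 + ∑ i : I, |u i w| with hsdef
      refine ⟨s, ?_⟩
      have hset : {i : I | t ≤ u i v} = {i : I | s ≤ u i w} := by
        ext i
        simp only [Set.mem_setOf_eq]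
        constructor
        · intro hi; exact absurd hi (not_le.mpr (hS i))
        · intro hi
          exfalso
          have h1 : u i w ≤ ∑ j : I, |u j w| :=
            le_trans (le_abs_self _)
              (Finset.single_le_sum (f := fun j : I => |u j w|) (fun j _ => abs_nonneg _) (Finset.mem_univ i))
          have : u i w < s := by rw [hsdef]; linarith
          exact absurd hi (not_le.mpr this)
      rw [hset]
  exact mem_nhds_iff.mpr ⟨N, fun w hw => hUup (hsub w hw) hv, hNopen, hvN⟩
end

section
/- (Constancy of flag subspaces on connected components.) In the flag setup, fix a natural number j, and let S_j = {v ∈ ℝ^n : ∃ t ∈ ℝ, the k-dimension (finrank) of F_v(t) equals j}, with its subspace topology from ℝ^n. If v and v' lie in the same connected component of S_j, and t, t' ∈ ℝ are such that F_v(t) and F_{v'}(t') both have k-dimension j, then F_v(t) = F_{v'}(t'). In other words, the j-dimensional member of the flag Fl(v) is constant on each connected component of the set of points v for which Fl(v) has a j-dimensional member. -/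
open Module

section FlagAux

variable {k : Type*} [Field k] {E : Type*} [AddCommGroup E] [Module k E]
  [FiniteDimensional k E] {I : Type*} [Fintype I] {n : ℕ}

/-- The flag subspace `F_x(s)`. -/
noncomputable def flagF (u : I → ((Fin n → ℝ) →ₗ[ℝ] ℝ)) (W : I → Submodule k E)
    (x : Fin n → ℝ) (s : ℝ) : Submodule k E :=
  ⨆ i ∈ {i : I | s ≤ u i x}, W i

/-- Sandwich lemma: near `x`, every index set `{i | s ≤ u i x'}` is squeezed between
two upper sets of the values `u i x`. -/
lemma flag_sandwich (u : I → ((Fin n → ℝ) →ₗ[ℝ] ℝ)) (x : Fin n → ℝ) :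
    ∃ δ > 0, ∀ x' : Fin n → ℝ, dist x' x < δ → ∀ s : ℝ, ∃ m : ℝ,
      {i : I | m < u i x} ⊆ {i : I | s ≤ u i x'} ∧
      {i : I | s ≤ u i x'} ⊆ {i : I | m ≤ u i x} := by
  obtain ⟨ε, εpos, hε⟩ : ∃ ε > 0, ∀ i j : I, u i x < u j x → u i x + 2*ε ≤ u j x := by
    by_cases hP : (Finset.univ.filter fun p : I × I => u p.1 x < u p.2 x).Nonempty
    · obtain ⟨p₀, hp₀, hmin⟩ := Finset.exists_min_image _ (fun p => u p.2 x - u p.1 x) hP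
      have h0 : u p₀.1 x < u p₀.2 x := by simpa using hp₀
      refine ⟨(u p₀.2 x - u p₀.1 x)/4, by linarith, fun i j hij => ?_⟩
      have := hmin (i, j) (by simp [hij])
      simp only at this
      linarith
    · refine ⟨1, one_pos, fun i j hij => absurd ?_ hP⟩
      exact ⟨(i, j), by simp [hij]⟩
  have hcont : Continuous fun y : Fin n → ℝ => fun i : I => u i y :=
    continuous_pi fun i => (u i).continuous_of_finiteDimensional
  obtain ⟨δ, δpos, hδ⟩ := Metric.continuousAt_iff.mp hcont.continuousAt ε εpos
  obtain ⟨M, hM⟩ := (Set.finite_range fun i => u i x).bddAbove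
  refine ⟨δ, δpos, fun x' hx' s => ?_⟩
  have hpt : ∀ i, |u i x' - u i x| < ε := by
    intro i
    have := (dist_pi_lt_iff εpos).mp (hδ hx') i
    simpa [Real.dist_eq] using this
  by_cases hA : (Finset.univ.filter fun i : I => s ≤ u i x').Nonempty
  · obtain ⟨i₀, hi₀, hmin⟩ := Finset.exists_min_image _ (fun i => u i x) hA
    have hi₀s : s ≤ u i₀ x' := by simpa using hi₀
    refine ⟨u i₀ x, fun i hi => ?_, fun i hi => ?_⟩
    · have h1 := hε i₀ i hi
      have h2 := abs_lt.mp (hpt i)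
      have h3 := abs_lt.mp (hpt i₀)
      show s ≤ u i x'
      linarith [h2.1, h2.2, h3.1, h3.2]
    · exact hmin i (by simpa using hi)
  · refine ⟨M + 1, fun i hi => ?_, fun i hi => ?_⟩
    · have : u i x ≤ M := hM ⟨i, rfl⟩
      have : (M + 1 : ℝ) < u i x := hi
      linarith
    · exact absurd ⟨i, by simpa using hi⟩ hA
end FlagAux

section FlagAux2

variable {k : Type*} [Field k] {E : Type*} [AddCommGroup E] [Module k E]
  [FiniteDimensional k E] {I : Type*} [Fintype I] {n : ℕ}

/-- Local constancy of the `j`-dimensional flag member. -/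
lemma flag_local_const (u : I → ((Fin n → ℝ) →ₗ[ℝ] ℝ)) (W : I → Submodule k E) (j : ℕ)
    (x : Fin n → ℝ) :
    ∃ δ > 0, ∀ x' : Fin n → ℝ, dist x' x < δ → ∀ s t : ℝ,
      finrank k (flagF u W x' s) = j → finrank k (flagF u W x t) = j →
      flagF u W x' s = flagF u W x t := by
  obtain ⟨δ, δpos, hδ⟩ := flag_sandwich u x
  refine ⟨δ, δpos, fun x' hx' s t hs htr => ?_⟩
  obtain ⟨m, h1, h2⟩ := hδ x' hx' s
  rcases le_or_gt t m with h | h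
  · have hQ : flagF u W x' s ≤ flagF u W x t :=
      le_trans (biSup_mono h2) (biSup_mono fun i (hi : m ≤ u i x) => le_trans h hi)
    exact Submodule.eq_of_le_of_finrank_le hQ (by rw [hs, htr])
  · have hP : flagF u W x t ≤ flagF u W x' s := by
      refine le_trans (biSup_mono ?_) (biSup_mono h1)
      exact fun i (hi : t ≤ u i x) => h.trans_le hi
    exact (Submodule.eq_of_le_of_finrank_le hP (by rw [hs, htr])).symm

end FlagAux2

/-- Constancy of flag subspaces on connected components: with
`F_v(t) = ⨆ {W i : u i v ≥ t}` and
`S_j = {v ∈ ℝⁿ : some member of the flag of v has dimension j}` (with its subspace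
topology from `ℝⁿ`), if `v` and `v'` lie in the same connected component of `S_j`,
then the `j`-dimensional members of their flags coincide. -/
theorem flag_subspace_constant_on_components {k : Type*} [Field k] {E : Type*}
    [AddCommGroup E] [Module k E] [FiniteDimensional k E] {I : Type*} [Fintype I] {n : ℕ}
    (u : I → ((Fin n → ℝ) →ₗ[ℝ] ℝ)) (W : I → Submodule k E) (j : ℕ)
    (v v' : Fin n → ℝ)
    (hv' : v' ∈ connectedComponentIn
      {x : Fin n → ℝ |
        ∃ s : ℝ, Module.finrank k (⨆ i ∈ {i : I | s ≤ u i x}, W i : Submodule k E) = j} v)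
    (t t' : ℝ)
    (ht : Module.finrank k (⨆ i ∈ {i : I | t ≤ u i v}, W i : Submodule k E) = j)
    (ht' : Module.finrank k (⨆ i ∈ {i : I | t' ≤ u i v'}, W i : Submodule k E) = j) :
    (⨆ i ∈ {i : I | t ≤ u i v}, W i : Submodule k E) =
      ⨆ i ∈ {i : I | t' ≤ u i v'}, W i := by
  set S : Set (Fin n → ℝ) := {x | ∃ s : ℝ, finrank k (flagF u W x s) = j} with hSdef
  have ht0 : finrank k (flagF u W v t) = j := ht
  have ht0' : finrank k (flagF u W v' t') = j := ht'
  have hvS : v ∈ S := ⟨t, ht0⟩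
  have hv'' : v' ∈ connectedComponentIn S v := hv'
  set T : Set S := {y | ∀ s : ℝ,
    finrank k (flagF u W y.val s) = j → flagF u W y.val s = flagF u W v t} with hTdef
  have hTopen : IsOpen T := by
    rw [Metric.isOpen_iff]
    rintro ⟨y, hy⟩ hyT
    obtain ⟨δ, δpos, hδ⟩ := flag_local_const u W j y
    refine ⟨δ, δpos, ?_⟩
    rintro ⟨z, hz⟩ hzball s hzs
    have hdist : dist z y < δ := by
      simpa [Metric.mem_ball, Subtype.dist_eq] using hzball
    obtain ⟨t₀, ht₀⟩ := hy
    rw [hδ z hdist s t₀ hzs ht₀]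
    exact hyT t₀ ht₀
  have hTclosed : IsClosed T := by
    rw [← isOpen_compl_iff, Metric.isOpen_iff]
    rintro ⟨y, hy⟩ hyT
    obtain ⟨δ, δpos, hδ⟩ := flag_local_const u W j y
    refine ⟨δ, δpos, ?_⟩
    rintro ⟨z, hz⟩ hzball hzT
    have hdist : dist z y < δ := by
      simpa [Metric.mem_ball, Subtype.dist_eq] using hzball
    apply hyT
    intro s hys
    obtain ⟨s', hs'⟩ := hz
    have h1 := hzT s' hs'
    have h2 := hδ z hdist s' s hs' hys
    rw [← h2, h1]
  have hvT : (⟨v, hvS⟩ : S) ∈ T := by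
    intro s hs
    obtain ⟨δ, δpos, hδ⟩ := flag_local_const u W j v
    exact hδ v (by simpa using δpos) s t hs ht0
  have hsub : connectedComponent (⟨v, hvS⟩ : S) ⊆ T :=
    IsClopen.connectedComponent_subset ⟨hTclosed, hTopen⟩ hvT
  rw [connectedComponentIn_eq_image hvS] at hv''
  obtain ⟨⟨y, hyS⟩, hyc, rfl⟩ := hv''
  exact (hsub hyc t' ht0').symm
end
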